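/- Let d ≥ 1, D, G > 0, and let U ⊆ ℝ^d be a nonempty closed convex set containing 0 with ‖u − v‖ ≤ D for all u, v ∈ U. Let η_1,…,η_m ∈ (0, 1/(5DG)] with prior weights π^1,…,π^m > 0 summing to 1. Define jointly, for t = 1,…,T: the master prediction w_t = (Σ_j π^j·e^{−L_{t−1}^j}·η_j·w_t^j)/(Σ_j π^j·e^{−L_{t−1}^j}·η_j), a gradient g_t ∈ ℝ^d with ‖g_t‖ ≤ G, M_t = g_t·g_tᵀ, the surrogate losses ℓ_t^η(u) = −η⟨w_t − u, g_t⟩ + η²(⟨u − w_t, g_t⟩)², the cumulative slave losses L_t^j = Σ_{s=1}^t ℓ_s^{η_j}(w_s^j) (L_0^j = 0), and for each j the slave iterates w_1^j = 0, Σ_{t+1}^j = (D^{−2}I + 2η_j²Σ_{s=1}^t M_s)^{−1}, w̃_{t+1}^j = w_t^j − Σ_{t+1}^j·(η_j·g_t + 2η_j²·M_t·(w_t^j − w_t)), and w_{t+1}^j ∈ U the unique minimizer over u ∈ U of (u − w̃_{t+1}^j)ᵀ(Σ_{t+1}^j)^{−1}(u − w̃_{t+1}^j). Then for every j ∈ {1,…,m}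 and every u ∈ U: Σ_{t=1}^T ⟨w_t − u, g_t⟩ ≤ η_j·V_T^u + (‖u‖²/(2D²) − ln π^j + (1/2)·ln det(I + 2η_j²D²·Σ_{t=1}^T M_t)) / η_j, where V_T^u = Σ_{t=1}^T (⟨u − w_t, g_t⟩)². -/

import Mathlib

/-!
The master's potential `Φ_t = Σ_j π^j e^{-L_t^j}` never increases: the surrogate loss of slave `j`
in round `t` is `-x_j + x_j²` with `x_j = η_j⟨w_t - w_t^j, g_t⟩`, `|x_j| ≤ 1/5`, so
`e^{x_j - x_j²} ≤ 1 + x_j`, and the tilted average `w_t` is exactly the point making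
`Σ_j π^j e^{-L_{t-1}^j} x_j` vanish. Hence `π^j e^{-L_T^j} ≤ Φ_0 = 1`, i.e. `ln π^j ≤ L_T^j`.

Each slave runs online Newton step on its quadratic surrogate. With `A_t = (Σ_{t+1}^j)⁻¹`, the
Pythagorean inequality for the `A_t`-projection onto `U` and `A_t = A_{t-1} + 2η² g_t g_tᵀ` give
`2(ℓ_t(w_t^j) - ℓ_t(u)) ≤ φ_{t-1} - φ_t` for `φ_t = ‖w_{t+1}^j - u‖²_{A_t} - ln det A_t`; the
price of the gradient step, `b_tᵀ A_t⁻¹ b_t ≤ 2η² g_tᵀ A_t⁻¹ g_t`, is paid by the growth of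
`ln det A_t` (matrix determinant lemma). Telescoping bounds `L_T^j - Σ_t ℓ_t(u)`, and
`Σ_t ℓ_t(u) = -η Σ_t ⟨w_t - u, g_t⟩ + η² V_T^u` turns the two bounds into the claim.
-/

open Matrix Finset

theorem Real.exp_sub_sq_le_one_add {x : ℝ} (hx : |x| ≤ 1 / 3) :
    Real.exp (x - x ^ 2) ≤ 1 + x := by
  have hpos : 0 < 1 + x := by linarith [neg_abs_le x]
  rw [← Real.exp_log hpos, Real.exp_le_exp]
  have htaylor := Real.abs_log_sub_add_sum_range_le (x := -x) (by rw [abs_neg]; linarith) 2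
  simp only [sum_range_succ, sum_range_zero, abs_neg, sub_neg_eq_add] at htaylor
  have hrem : |x| ^ 3 / (1 - |x|) ≤ x ^ 2 / 2 := by
    rw [div_le_iff₀ (by linarith), ← sq_abs x]
    nlinarith [abs_nonneg x, pow_two_nonneg |x|]
  norm_num at htaylor
  linarith [(abs_le.1 htaylor).1]

theorem Finset.sum_mul_exp_sub_sq_le {ι : Type*} (s : Finset ι) {p x : ι → ℝ}
    (hp : ∀ i ∈ s, 0 ≤ p i) (hx : ∀ i ∈ s, |x i| ≤ 1 / 3) (hpx : ∑ i ∈ s, p i * x i = 0) :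
    ∑ i ∈ s, p i * Real.exp (x i - x i ^ 2) ≤ ∑ i ∈ s, p i :=
  calc ∑ i ∈ s, p i * Real.exp (x i - x i ^ 2) ≤ ∑ i ∈ s, p i * (1 + x i) :=
        sum_le_sum fun i hi =>
          mul_le_mul_of_nonneg_left (Real.exp_sub_sq_le_one_add (hx i hi)) (hp i hi)
    _ = ∑ i ∈ s, p i := by simp only [mul_add, mul_one, sum_add_distrib, hpx, add_zero]

theorem Finset.sum_smul_centerMass_sub_eq_zero {ι E : Type*} [AddCommGroup E] [Module ℝ E]
    (s : Finset ι) {c : ι → ℝ} (hc : ∀ i ∈ s, 0 < c i) (z : ι → E) :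
    ∑ i ∈ s, c i • (s.centerMass c z - z i) = 0 := by
  rcases s.eq_empty_or_nonempty with rfl | hs
  · simp
  have hsum : ∑ i ∈ s, c i ≠ 0 := (sum_pos hc hs).ne'
  simp only [smul_sub, sum_sub_distrib, ← sum_smul, centerMass, smul_inv_smul₀ hsum, sub_self]

theorem Finset.sum_Icc_le_sub_of_le {f φ : ℕ → ℝ} {n : ℕ}
    (h : ∀ t ∈ Icc 1 n, f t ≤ φ (t - 1) - φ t) : ∑ t ∈ Icc 1 n, f t ≤ φ 0 - φ n := by
  induction n with
  | zero => simp
  | succ n ih =>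
    rw [sum_Icc_succ_top (by omega)]
    have hlast := h (n + 1) (by simp)
    have hprev := ih fun t ht => h t (Icc_subset_Icc_right n.le_succ ht)
    simp only [Nat.add_sub_cancel] at hlast
    linarith

theorem abs_dotProduct_le_sqrt_mul_sqrt {n : Type*} [Fintype n] (x y : n → ℝ) :
    |x ⬝ᵥ y| ≤ √(∑ i, x i ^ 2) * √(∑ i, y i ^ 2) := by
  refine abs_le.2 ⟨?_, Real.sum_mul_le_sqrt_mul_sqrt _ x y⟩
  have := Real.sum_mul_le_sqrt_mul_sqrt univ (-x) y
  simp only [Pi.neg_apply, neg_mul, sum_neg_distrib, neg_sq] at this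
  rw [dotProduct]
  linarith

section QuadraticForm

variable {n : Type*} [Fintype n] {A : Matrix n n ℝ}

theorem Matrix.det_add_vecMulVec [DecidableEq n] (hA : IsUnit A.det) (u v : n → ℝ) :
    (A + vecMulVec u v).det = A.det * (1 + v ⬝ᵥ A⁻¹ *ᵥ u) := by
  have hfactor :
      A + vecMulVec u v = A * (1 + replicateCol Unit (A⁻¹ *ᵥ u) * replicateRow Unit v) := by
    rw [Matrix.mul_add, Matrix.mul_one, replicateCol_mulVec, ← Matrix.mul_assoc,
      ← Matrix.mul_assoc, mul_nonsing_inv _ hA, Matrix.one_mul, vecMulVec_eq Unit]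
  rw [hfactor, det_mul, det_one_add_replicateCol_mul_replicateRow]

theorem Matrix.mul_dotProduct_inv_mulVec_le_log_det_sub [DecidableEq n] (a : ℝ) (v : n → ℝ)
    (hA : 0 < A.det) (hB : 0 < (A - a • vecMulVec v v).det) :
    a * (v ⬝ᵥ A⁻¹ *ᵥ v) ≤ Real.log A.det - Real.log (A - a • vecMulVec v v).det := by
  have hdet : (A - a • vecMulVec v v).det = A.det * (1 - a * (v ⬝ᵥ A⁻¹ *ᵥ v)) := by
    rw [sub_eq_add_neg, ← neg_smul, ← smul_vecMulVec, det_add_vecMulVec hA.ne'.isUnit,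
      mulVec_smul, dotProduct_smul, smul_eq_mul, neg_mul, ← sub_eq_add_neg]
  have hlog := Real.one_sub_inv_le_log_of_pos (div_pos hA hB)
  rw [inv_div, Real.log_div hA.ne' hB.ne', hdet, mul_div_cancel_left₀ _ hA.ne',
    sub_sub_cancel] at hlog
  rwa [hdet]

theorem Matrix.IsHermitian.dotProduct_mulVec_comm (hA : A.IsHermitian) (x y : n → ℝ) :
    x ⬝ᵥ A *ᵥ y = y ⬝ᵥ A *ᵥ x := by
  rw [dotProduct_mulVec, ← mulVec_transpose, ← conjTranspose_eq_transpose_of_trivial, hA.eq,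
    dotProduct_comm]

theorem Matrix.IsHermitian.dotProduct_mulVec_add_add (hA : A.IsHermitian) (x y : n → ℝ) :
    (x + y) ⬝ᵥ A *ᵥ (x + y) = x ⬝ᵥ A *ᵥ x + 2 * (x ⬝ᵥ A *ᵥ y) + y ⬝ᵥ A *ᵥ y := by
  rw [mulVec_add, dotProduct_add, add_dotProduct, add_dotProduct,
    hA.dotProduct_mulVec_comm y x]
  ring

theorem Matrix.dotProduct_mulVec_neg_neg (x : n → ℝ) :
    (-x) ⬝ᵥ A *ᵥ (-x) = x ⬝ᵥ A *ᵥ x := by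
  rw [mulVec_neg, neg_dotProduct, dotProduct_neg, neg_neg]

theorem Matrix.PosSemidef.dotProduct_mulVec_add_le_of_isMinOn (hA : A.PosSemidef)
    {U : Set (n → ℝ)} (hU : Convex ℝ U) {z p u : n → ℝ} (hp : p ∈ U) (hu : u ∈ U)
    (hmin : IsMinOn (fun v => (v - z) ⬝ᵥ A *ᵥ (v - z)) U p) :
    (u - p) ⬝ᵥ A *ᵥ (u - p) + (p - z) ⬝ᵥ A *ᵥ (p - z) ≤ (u - z) ⬝ᵥ A *ᵥ (u - z) := by
  set B := (p - z) ⬝ᵥ A *ᵥ (u - p)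
  set q := (u - p) ⬝ᵥ A *ᵥ (u - p)
  -- first-order optimality of `p` along the segment towards `u`
  have hsegment : ∀ s ∈ Set.Ioc (0 : ℝ) 1, 0 ≤ 2 * B + s * q := by
    rintro s ⟨hs0, hs1⟩
    have hexpand : (p + s • (u - p) - z) ⬝ᵥ A *ᵥ (p + s • (u - p) - z) =
        (p - z) ⬝ᵥ A *ᵥ (p - z) + s * (2 * B + s * q) := by
      rw [show p + s • (u - p) - z = (p - z) + s • (u - p) by abel,
        hA.isHermitian.dotProduct_mulVec_add_add]
      simp only [mulVec_smul, smul_dotProduct, dotProduct_smul, smul_eq_mul, B, q]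
      ring
    have hle := isMinOn_iff.1 hmin _ (hU.add_smul_sub_mem hp hu ⟨hs0.le, hs1⟩)
    rw [hexpand, le_add_iff_nonneg_right] at hle
    exact nonneg_of_mul_nonneg_right (by linarith) hs0
  have hB : 0 ≤ 2 * B + 0 * q := by
    have hlim : Filter.Tendsto (fun s : ℝ => 2 * B + s * q) (nhdsWithin 0 (Set.Ioi 0))
        (nhds (2 * B + 0 * q)) :=
      ((by fun_prop : Continuous fun s : ℝ => 2 * B + s * q).tendsto 0).mono_left
        nhdsWithin_le_nhds
    refine ge_of_tendsto hlim ?_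
    filter_upwards [Ioc_mem_nhdsGT one_pos] with s hs using hsegment s hs
  rw [show u - z = (u - p) + (p - z) by abel, hA.isHermitian.dotProduct_mulVec_add_add,
    hA.isHermitian.dotProduct_mulVec_comm (u - p) (p - z)]
  linarith

theorem Matrix.PosDef.two_mul_dotProduct_add_le_of_isMinOn [DecidableEq n] (hA : A.PosDef)
    {U : Set (n → ℝ)} (hU : Convex ℝ U) {x b p u : n → ℝ} (hp : p ∈ U) (hu : u ∈ U)
    (hmin : IsMinOn (fun v => (v - (x - A⁻¹ *ᵥ b)) ⬝ᵥ A *ᵥ (v - (x - A⁻¹ *ᵥ b))) U p) :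
    2 * (b ⬝ᵥ (x - u)) + (p - u) ⬝ᵥ A *ᵥ (p - u) ≤
      (x - u) ⬝ᵥ A *ᵥ (x - u) + b ⬝ᵥ A⁻¹ *ᵥ b := by
  have hpyth := hA.posSemidef.dotProduct_mulVec_add_le_of_isMinOn hU hp hu hmin
  have hcancel : A *ᵥ (A⁻¹ *ᵥ b) = b := by
    rw [mulVec_mulVec, mul_nonsing_inv _ hA.det_pos.ne'.isUnit, one_mulVec]
  rw [show u - (x - A⁻¹ *ᵥ b) = -(x - u) + A⁻¹ *ᵥ b by abel,
    hA.isHermitian.dotProduct_mulVec_add_add, hcancel, dotProduct_mulVec_neg_neg,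
    neg_dotProduct, dotProduct_comm (x - u) b, dotProduct_comm (A⁻¹ *ᵥ b) b, ← neg_sub p u,
    dotProduct_mulVec_neg_neg] at hpyth
  have hnonneg := hA.posSemidef.dotProduct_mulVec_nonneg (p - (x - A⁻¹ *ᵥ b))
  rw [star_trivial] at hnonneg
  linarith

end QuadraticForm

section Surrogate

variable {n : Type*} [Fintype n]

/-- The surrogate loss `ℓ_t^η(u)` of the paper, with `w = w_t` and `g = g_t`. -/
def surrogate (η : ℝ) (w g u : n → ℝ) : ℝ :=
  -η * ((w - u) ⬝ᵥ g) + η ^ 2 * ((u - w) ⬝ᵥ g) ^ 2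

theorem surrogate_eq (η : ℝ) (w g x : n → ℝ) :
    surrogate η w g x = -(η * ((w - x) ⬝ᵥ g)) + (η * ((w - x) ⬝ᵥ g)) ^ 2 := by
  rw [surrogate, ← neg_sub w x, neg_dotProduct]
  ring

theorem surrogate_sub_surrogate (η : ℝ) (w g x u : n → ℝ) :
    surrogate η w g x - surrogate η w g u =
      (η • g + (2 * η ^ 2) • vecMulVec g g *ᵥ (x - w)) ⬝ᵥ (x - u) -
        η ^ 2 * ((x - u) ⬝ᵥ g) ^ 2 := by
  simp only [surrogate, vecMulVec_mulVec, op_smul_eq_smul, smul_smul, add_dotProduct,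
    smul_dotProduct, smul_eq_mul, sub_dotProduct, dotProduct_comm g]
  ring

theorem sum_surrogate (η : ℝ) (w g : ℕ → n → ℝ) (u : n → ℝ) (s : Finset ℕ) :
    ∑ t ∈ s, surrogate η (w t) (g t) u =
      -(η * ∑ t ∈ s, (w t - u) ⬝ᵥ g t) + η ^ 2 * ∑ t ∈ s, ((u - w t) ⬝ᵥ g t) ^ 2 := by
  simp only [surrogate, mul_sum, sum_add_distrib, neg_mul, sum_neg_distrib]

theorem abs_mul_dotProduct_sub_le {D G η : ℝ} (hD : 0 < D) (hG : 0 < G)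
    (hη : η ∈ Set.Ioc 0 (1 / (5 * D * G))) {a b g : n → ℝ}
    (hab : √(∑ i, (a i - b i) ^ 2) ≤ D) (hg : √(∑ i, g i ^ 2) ≤ G) :
    |η * ((a - b) ⬝ᵥ g)| ≤ 1 / 5 := by
  have hcs : |(a - b) ⬝ᵥ g| ≤ D * G :=
    (abs_dotProduct_le_sqrt_mul_sqrt _ _).trans (mul_le_mul hab hg (Real.sqrt_nonneg _) hD.le)
  rw [abs_mul, abs_of_pos hη.1]
  calc η * |(a - b) ⬝ᵥ g| ≤ 1 / (5 * D * G) * (D * G) :=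
        mul_le_mul hη.2 hcs (abs_nonneg _) (by positivity)
    _ = 1 / 5 := by field_simp

end Surrogate

theorem log_le_cumLoss {n ι : Type*} [Fintype n] [Fintype ι] {T : ℕ} {η π : ι → ℝ}
    (hη : ∀ j, 0 < η j) (hπ : ∀ j, 0 < π j) (hπsum : ∑ j, π j = 1)
    {g w : ℕ → n → ℝ} {ws : ℕ → ι → n → ℝ} {L : ℕ → ι → ℝ}
    (hL : ∀ t j, L t j = ∑ s ∈ Icc 1 t, surrogate (η j) (w s) (g s) (ws s j))
    (hw : ∀ t, 1 ≤ t → t ≤ T →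
      w t = univ.centerMass (fun j => π j * Real.exp (-L (t - 1) j) * η j) (ws t))
    (hsmall : ∀ t, 1 ≤ t → t ≤ T → ∀ j, |η j * ((w t - ws t j) ⬝ᵥ g t)| ≤ 1 / 3) (j : ι) :
    Real.log (π j) ≤ L T j := by
  set Φ : ℕ → ℝ := fun t => ∑ j, π j * Real.exp (-L t j)
  have hstep : ∀ t ∈ Icc 1 T, Φ t ≤ Φ (t - 1) := by
    intro t ht
    obtain ⟨t1, htT⟩ := mem_Icc.1 ht
    obtain ⟨s, rfl⟩ : ∃ s, t = s + 1 := ⟨t - 1, by omega⟩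
    set x : ι → ℝ := fun j => η j * ((w (s + 1) - ws (s + 1) j) ⬝ᵥ g (s + 1))
    have hexp : ∀ j,
        Real.exp (-L (s + 1) j) = Real.exp (-L s j) * Real.exp (x j - x j ^ 2) := by
      intro j
      rw [hL, sum_Icc_succ_top (by omega), ← hL, surrogate_eq, ← Real.exp_add]
      congr 1
      simp only [x]
      ring
    have hbalance : ∑ j, π j * Real.exp (-L s j) * x j = 0 := by
      have h := univ.sum_smul_centerMass_sub_eq_zero
        (c := fun j => π j * Real.exp (-L s j) * η j)
        (fun j _ => mul_pos (mul_pos (hπ j) (Real.exp_pos _)) (hη j)) (ws (s + 1))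
      have hws := hw (s + 1) t1 htT
      rw [Nat.add_sub_cancel] at hws
      rw [← hws] at h
      simpa [x, sum_dotProduct, mul_assoc] using congrArg (· ⬝ᵥ g (s + 1)) h
    simpa only [Φ, hexp, ← mul_assoc, Nat.add_sub_cancel] using
      univ.sum_mul_exp_sub_sq_le (fun j _ => (mul_pos (hπ j) (Real.exp_pos _)).le)
        (fun j _ => hsmall (s + 1) t1 htT j) hbalance
  have hΦ0 : Φ 0 = 1 := by simp [Φ, hL, hπsum]
  have hΦ : Φ T ≤ 1 := by
    have := sum_Icc_le_sub_of_le (f := fun _ => 0) (φ := Φ) fun t ht => sub_nonneg.2 (hstep t ht)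
    rw [sum_const_zero] at this
    linarith
  have hj : π j * Real.exp (-L T j) ≤ 1 :=
    (single_le_sum (f := fun i => π i * Real.exp (-L T i))
      (fun i _ => (mul_pos (hπ i) (Real.exp_pos _)).le) (mem_univ j)).trans hΦ
  have := Real.log_le_log (mul_pos (hπ j) (Real.exp_pos _)) hj
  rw [Real.log_mul (hπ j).ne' (Real.exp_pos _).ne', Real.log_exp, Real.log_one] at this
  linarith

section Precision

variable {n : Type*} [DecidableEq n] {D η : ℝ} {M : ℕ → Matrix n n ℝ}

/-- The inverse `(Σ_{t+1})⁻¹` of the slave covariance of the paper. -/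
noncomputable def precision (D η : ℝ) (M : ℕ → Matrix n n ℝ) (t : ℕ) : Matrix n n ℝ :=
  (D ^ 2)⁻¹ • 1 + (2 * η ^ 2) • ∑ s ∈ Icc 1 t, M s

theorem precision_succ (t : ℕ) :
    precision D η M (t + 1) = precision D η M t + (2 * η ^ 2) • M (t + 1) := by
  rw [precision, precision, sum_Icc_succ_top (by omega), smul_add, add_assoc]

theorem posDef_precision (hD : 0 < D) (hM : ∀ s, (M s).PosSemidef) (t : ℕ) :
    (precision D η M t).PosDef :=
  (PosDef.one.smul (by positivity)).add_posSemidef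
    ((posSemidef_sum _ fun s _ => hM s).smul (by positivity))

theorem precision_eq_smul (hD : 0 < D) (t : ℕ) :
    precision D η M t = (D ^ 2)⁻¹ • (1 + (2 * η ^ 2 * D ^ 2) • ∑ s ∈ Icc 1 t, M s) := by
  rw [precision, smul_add, smul_smul, inv_mul_eq_div, mul_div_cancel_right₀ _ (by positivity)]

theorem log_det_precision_sub_log_det_precision_zero [Fintype n] (hD : 0 < D)
    (hM : ∀ s, (M s).PosSemidef) (t : ℕ) :
    Real.log (precision D η M t).det - Real.log (precision D η M 0).det =
      Real.log (1 + (2 * η ^ 2 * D ^ 2) • ∑ s ∈ Icc 1 t, M s).det := by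
  have hpos := (posDef_precision (η := η) hD hM t).det_pos
  rw [precision_eq_smul hD, det_smul] at hpos
  have hdet := pos_of_mul_pos_right hpos (by positivity)
  have hzero : precision D η M 0 = (D ^ 2)⁻¹ • 1 := by simp [precision]
  rw [precision_eq_smul hD, det_smul, hzero, det_smul, det_one, mul_one,
    Real.log_mul (by positivity) hdet.ne']
  ring

end Precision

section Slave

variable {n : Type*} [Fintype n] [DecidableEq n]

theorem surrogate_round_le {η : ℝ} {A B : Matrix n n ℝ} {U : Set (n → ℝ)} {w g x p u : n → ℝ}
    (hB : B.PosDef) (hAB : A = B + (2 * η ^ 2) • vecMulVec g g) (hU : Convex ℝ U)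
    (hp : p ∈ U) (hu : u ∈ U) (hsmall : |η * ((x - w) ⬝ᵥ g)| ≤ 1 / 5)
    (hmin : IsMinOn (fun v =>
      (v - (x - A⁻¹ *ᵥ (η • g + (2 * η ^ 2) • vecMulVec g g *ᵥ (x - w)))) ⬝ᵥ
        A *ᵥ (v - (x - A⁻¹ *ᵥ (η • g + (2 * η ^ 2) • vecMulVec g g *ᵥ (x - w))))) U p) :
    2 * (surrogate η w g x - surrogate η w g u) ≤
      ((x - u) ⬝ᵥ B *ᵥ (x - u) - Real.log B.det) -
        ((p - u) ⬝ᵥ A *ᵥ (p - u) - Real.log A.det) := by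
  set b := η • g + (2 * η ^ 2) • vecMulVec g g *ᵥ (x - w)
  have hgg : (vecMulVec g g).PosSemidef := by
    simpa using posSemidef_vecMulVec_self_star g
  have hA : A.PosDef := hAB ▸ hB.add_posSemidef (hgg.smul (by positivity))
  have hstep := hA.two_mul_dotProduct_add_le_of_isMinOn hU hp hu hmin
  have hquad : (x - u) ⬝ᵥ A *ᵥ (x - u) =
      (x - u) ⬝ᵥ B *ᵥ (x - u) + 2 * η ^ 2 * ((x - u) ⬝ᵥ g) ^ 2 := by
    simp only [hAB, add_mulVec, smul_mulVec, vecMulVec_mulVec, op_smul_eq_smul, dotProduct_add,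
      dotProduct_smul, smul_eq_mul, dotProduct_comm g]
    ring
  -- `b = η c g` with `c = 1 + 2η⟨x - w, g⟩`, and `c² ≤ 2` because `|η⟨x - w, g⟩| ≤ 1/5`
  have hb : b ⬝ᵥ A⁻¹ *ᵥ b ≤ 2 * η ^ 2 * (g ⬝ᵥ A⁻¹ *ᵥ g) := by
    set c := 1 + 2 * (η * ((x - w) ⬝ᵥ g))
    have hbg : b = (η * c) • g := by
      simp only [b, c, vecMulVec_mulVec, op_smul_eq_smul, smul_smul, dotProduct_comm g,
        ← add_smul]
      congr 1
      ring
    have hc : c ^ 2 ≤ 2 := by nlinarith [abs_le.1 hsmall]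
    have hg : 0 ≤ g ⬝ᵥ A⁻¹ *ᵥ g := by
      simpa using hA.inv.posSemidef.dotProduct_mulVec_nonneg g
    calc b ⬝ᵥ A⁻¹ *ᵥ b = η ^ 2 * c ^ 2 * (g ⬝ᵥ A⁻¹ *ᵥ g) := by
          rw [hbg, smul_dotProduct, mulVec_smul, dotProduct_smul, smul_eq_mul, smul_eq_mul]
          ring
      _ ≤ η ^ 2 * 2 * (g ⬝ᵥ A⁻¹ *ᵥ g) := by gcongr
      _ = 2 * η ^ 2 * (g ⬝ᵥ A⁻¹ *ᵥ g) := by ring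
  have hlog : 2 * η ^ 2 * (g ⬝ᵥ A⁻¹ *ᵥ g) ≤ Real.log A.det - Real.log B.det := by
    have hBA : B = A - (2 * η ^ 2) • vecMulVec g g := by rw [hAB, add_sub_cancel_right]
    rw [hBA] at hB ⊢
    exact mul_dotProduct_inv_mulVec_le_log_det_sub (2 * η ^ 2) g hA.det_pos hB.det_pos
  rw [surrogate_sub_surrogate]
  linarith

theorem sum_surrogate_sub_le {T : ℕ} {D η : ℝ} (hD : 0 < D) {U : Set (n → ℝ)}
    (hU : Convex ℝ U) {u : n → ℝ} (hu : u ∈ U)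
    {g w : ℕ → n → ℝ} {M : ℕ → Matrix n n ℝ} (hM : ∀ t, M t = vecMulVec (g t) (g t))
    {x z : ℕ → n → ℝ} {S : ℕ → Matrix n n ℝ} (hx1 : x 1 = 0)
    (hS : ∀ t, 1 ≤ t → S (t + 1) = ((D ^ 2)⁻¹ • 1 + (2 * η ^ 2) • ∑ s ∈ Icc 1 t, M s)⁻¹)
    (hz : ∀ t, 1 ≤ t → t ≤ T →
      z (t + 1) = x t - S (t + 1) *ᵥ (η • g t + (2 * η ^ 2) • M t *ᵥ (x t - w t)))
    (hproj : ∀ t, 1 ≤ t → t ≤ T → x (t + 1) ∈ U ∧ ∀ v ∈ U,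
      (x (t + 1) - z (t + 1)) ⬝ᵥ (S (t + 1))⁻¹ *ᵥ (x (t + 1) - z (t + 1)) ≤
        (v - z (t + 1)) ⬝ᵥ (S (t + 1))⁻¹ *ᵥ (v - z (t + 1)))
    (hsmall : ∀ t, 1 ≤ t → t ≤ T → |η * ((x t - w t) ⬝ᵥ g t)| ≤ 1 / 5) :
    ∑ t ∈ Icc 1 T, (surrogate η (w t) (g t) (x t) - surrogate η (w t) (g t) u) ≤
      (∑ i, u i ^ 2) / (2 * D ^ 2) +
        1 / 2 * Real.log (1 + (2 * η ^ 2 * D ^ 2) • ∑ t ∈ Icc 1 T, M t).det := by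
  set A := precision D η M
  have hMpsd : ∀ s, (M s).PosSemidef := fun s => by
    simpa [hM s] using posSemidef_vecMulVec_self_star (g s)
  have hA := posDef_precision (η := η) hD hMpsd
  set φ : ℕ → ℝ := fun t => (x (t + 1) - u) ⬝ᵥ A t *ᵥ (x (t + 1) - u) - Real.log (A t).det
  have hround : ∀ t ∈ Icc 1 T,
      2 * (surrogate η (w t) (g t) (x t) - surrogate η (w t) (g t) u) ≤ φ (t - 1) - φ t := by
    intro t ht
    obtain ⟨t1, htT⟩ := mem_Icc.1 ht
    obtain ⟨s, rfl⟩ : ∃ s, t = s + 1 := ⟨t - 1, by omega⟩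
    obtain ⟨hp, hmin⟩ := hproj _ t1 htT
    have hSA : S (s + 1 + 1) = (A (s + 1))⁻¹ := hS _ t1
    rw [hz _ t1 htT, hSA, nonsing_inv_nonsing_inv _ (hA _).det_pos.ne'.isUnit, hM] at hmin
    have hAs : A (s + 1) = A s + (2 * η ^ 2) • vecMulVec (g (s + 1)) (g (s + 1)) := by
      rw [← hM]
      exact precision_succ s
    simpa only [φ, Nat.add_sub_cancel] using
      surrogate_round_le (hA s) hAs hU hp hu (hsmall _ t1 htT) (isMinOn_iff.2 hmin)
  have htel := sum_Icc_le_sub_of_le hround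
  rw [← mul_sum] at htel
  have hφ0 : φ 0 = (D ^ 2)⁻¹ * ∑ i, u i ^ 2 - Real.log (A 0).det := by
    have hzero : A 0 = (D ^ 2)⁻¹ • 1 := by simp [A, precision]
    simp [φ, hzero, hx1, smul_mulVec, dotProduct, sq, mul_sum, mul_left_comm]
  have hφT : -Real.log (A T).det ≤ φ T := by
    have := (hA T).posSemidef.dotProduct_mulVec_nonneg (x (T + 1) - u)
    rw [star_trivial] at this
    simp only [φ]
    linarith
  have hlog := log_det_precision_sub_log_det_precision_zero (η := η) hD hMpsd T
  have hscale : (∑ i, u i ^ 2) / (2 * D ^ 2) = (D ^ 2)⁻¹ * (∑ i, u i ^ 2) / 2 := by ring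
  rw [hscale]
  linarith

end Slave

theorem stmt_9_general {d m T : ℕ}
    (D G : ℝ) (hD : 0 < D) (hG : 0 < G)
    (U : Set (Fin d → ℝ)) (hUconv : Convex ℝ U)
    (hU0 : (0 : Fin d → ℝ) ∈ U)
    (hdiam : ∀ u ∈ U, ∀ v ∈ U, Real.sqrt (∑ i, (u i - v i) ^ 2) ≤ D)
    -- learning rates and prior weights
    (η : Fin m → ℝ) (hη : ∀ j, η j ∈ Set.Ioc (0 : ℝ) (1 / (5 * D * G)))
    (π : Fin m → ℝ) (hπ : ∀ j, 0 < π j) (hπsum : ∑ j, π j = 1)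
    -- gradients for rounds 1,…,T and the matrices M_t = g_t g_tᵀ
    (g : ℕ → Fin d → ℝ) (hg : ∀ t, 1 ≤ t → t ≤ T → Real.sqrt (∑ i, (g t i) ^ 2) ≤ G)
    (M : ℕ → Matrix (Fin d) (Fin d) ℝ)
    (hM : ∀ t, M t = Matrix.of fun i j => g t i * g t j)
    -- master predictions, surrogate losses and cumulative slave losses
    (w : ℕ → Fin d → ℝ) (ws : ℕ → Fin m → Fin d → ℝ)
    (ℓ : ℕ → ℝ → (Fin d → ℝ) → ℝ)
    (hℓ : ∀ t e u, ℓ t e u = -e * ((w t - u) ⬝ᵥ g t) + e ^ 2 * ((u - w t) ⬝ᵥ g t) ^ 2)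
    (L : ℕ → Fin m → ℝ)
    (hL : ∀ t j, L t j = ∑ s ∈ Finset.Icc 1 t, ℓ s (η j) (ws s j))
    -- the master: tilted exponentially weighted average of the slaves
    (hw : ∀ t, 1 ≤ t → t ≤ T →
      w t = (∑ j, π j * Real.exp (-(L (t - 1) j)) * η j)⁻¹ •
        ∑ j, (π j * Real.exp (-(L (t - 1) j)) * η j) • ws t j)
    -- the slaves: covariance matrices, unprojected updates, and projections onto U
    (S : ℕ → Fin m → Matrix (Fin d) (Fin d) ℝ)
    (hS : ∀ t, 1 ≤ t → ∀ j, S (t + 1) j =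
      ((D ^ 2)⁻¹ • (1 : Matrix (Fin d) (Fin d) ℝ) +
        (2 * (η j) ^ 2) • ∑ s ∈ Finset.Icc 1 t, M s)⁻¹)
    (wtil : ℕ → Fin m → Fin d → ℝ) (hws1 : ∀ j, ws 1 j = 0)
    (hwtil : ∀ t, 1 ≤ t → t ≤ T → ∀ j, wtil (t + 1) j =
      ws t j - (S (t + 1) j).mulVec
        ((η j) • g t + (2 * (η j) ^ 2) • (M t).mulVec (ws t j - w t)))
    (hproj : ∀ t, 1 ≤ t → t ≤ T → ∀ j, ws (t + 1) j ∈ U ∧ ∀ u ∈ U,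
      (ws (t + 1) j - wtil (t + 1) j) ⬝ᵥ
          (S (t + 1) j)⁻¹.mulVec (ws (t + 1) j - wtil (t + 1) j) ≤
        (u - wtil (t + 1) j) ⬝ᵥ (S (t + 1) j)⁻¹.mulVec (u - wtil (t + 1) j)) :
    -- conclusion: grid point regret bound
    ∀ j, ∀ u ∈ U,
      ∑ t ∈ Finset.Icc 1 T, (w t - u) ⬝ᵥ g t ≤
        η j * (∑ t ∈ Finset.Icc 1 T, ((u - w t) ⬝ᵥ g t) ^ 2) +
          ((∑ i, (u i) ^ 2) / (2 * D ^ 2) - Real.log (π j) +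
            (1 / 2) * Real.log
              (Matrix.det (1 + (2 * (η j) ^ 2 * D ^ 2) • ∑ t ∈ Finset.Icc 1 T, M t))) /
            η j := by
  intro j u hu
  have hL' : ∀ t i, L t i = ∑ s ∈ Icc 1 t, surrogate (η i) (w s) (g s) (ws s i) :=
    fun t i => (hL t i).trans (sum_congr rfl fun s _ => hℓ s (η i) (ws s i))
  have hwsU : ∀ t, 1 ≤ t → t ≤ T → ∀ i, ws t i ∈ U := by
    intro t ht htT i
    rcases ht.eq_or_lt with rfl | h
    · exact hws1 i ▸ hU0
    · obtain ⟨s, rfl⟩ : ∃ s, t = s + 1 := ⟨t - 1, by omega⟩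
      exact (hproj s (by omega) (by omega) i).1
  have hwU : ∀ t, 1 ≤ t → t ≤ T → w t ∈ U := by
    intro t ht htT
    have hc : ∀ i, 0 < π i * Real.exp (-L (t - 1) i) * η i :=
      fun i => mul_pos (mul_pos (hπ i) (Real.exp_pos _)) (hη i).1
    rw [hw t ht htT]
    exact hUconv.centerMass_mem (fun i _ => (hc i).le)
      (sum_pos (fun i _ => hc i) ⟨j, mem_univ j⟩) fun i _ => hwsU t ht htT i
  have hsmall : ∀ t, 1 ≤ t → t ≤ T → ∀ a ∈ U, ∀ b ∈ U, ∀ i,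
      |η i * ((a - b) ⬝ᵥ g t)| ≤ 1 / 5 := fun t ht htT a ha b hb i =>
    abs_mul_dotProduct_sub_le hD hG (hη i) (hdiam a ha b hb) (hg t ht htT)
  have hmaster := log_le_cumLoss (fun i => (hη i).1) hπ hπsum hL' hw (fun t ht htT i =>
    (hsmall t ht htT _ (hwU t ht htT) _ (hwsU t ht htT i) i).trans (by norm_num)) j
  have hslave := sum_surrogate_sub_le (x := fun t => ws t j) (z := fun t => wtil t j)
    (S := fun t => S t j) hD hUconv hu hM (hws1 j) (fun t ht => hS t ht j)
    (fun t ht htT => hwtil t ht htT j) (fun t ht htT => hproj t ht htT j)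
    fun t ht htT => hsmall t ht htT _ (hwsU t ht htT j) _ (hwU t ht htT) j
  rw [sum_sub_distrib, ← hL', sum_surrogate] at hslave
  rw [← sub_le_iff_le_add', le_div_iff₀ (hη j).1]
  linarith

/-- Theorem 6 of the paper (Grid point regret, full version of MetaGrad): for every grid
point `η_j` with prior weight `π^j` and every `u ∈ U`,
`Σ_t ⟨w_t − u, g_t⟩ ≤ η_j·V_T^u + (‖u‖²/(2D²) − ln π^j + ½ ln det(I + 2η_j²D²Σ_t M_t))/η_j`.
Here `ℝ^d` is modelled as `Fin d → ℝ` with the explicit Euclidean norm. -/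
theorem stmt_9 {d m T : ℕ} (hd : 1 ≤ d)
    (D G : ℝ) (hD : 0 < D) (hG : 0 < G)
    (U : Set (Fin d → ℝ)) (hUne : U.Nonempty) (hUclosed : IsClosed U) (hUconv : Convex ℝ U)
    (hU0 : (0 : Fin d → ℝ) ∈ U)
    (hdiam : ∀ u ∈ U, ∀ v ∈ U, Real.sqrt (∑ i, (u i - v i) ^ 2) ≤ D)
    -- learning rates and prior weights
    (η : Fin m → ℝ) (hη : ∀ j, η j ∈ Set.Ioc (0 : ℝ) (1 / (5 * D * G)))
    (π : Fin m → ℝ) (hπ : ∀ j, 0 < π j) (hπsum : ∑ j, π j = 1)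
    -- gradients for rounds 1,…,T and the matrices M_t = g_t g_tᵀ
    (g : ℕ → Fin d → ℝ) (hg : ∀ t, 1 ≤ t → t ≤ T → Real.sqrt (∑ i, (g t i) ^ 2) ≤ G)
    (M : ℕ → Matrix (Fin d) (Fin d) ℝ)
    (hM : ∀ t, M t = Matrix.of fun i j => g t i * g t j)
    -- master predictions, surrogate losses and cumulative slave losses
    (w : ℕ → Fin d → ℝ) (ws : ℕ → Fin m → Fin d → ℝ)
    (ℓ : ℕ → ℝ → (Fin d → ℝ) → ℝ)
    (hℓ : ∀ t e u, ℓ t e u = -e * ((w t - u) ⬝ᵥ g t) + e ^ 2 * ((u - w t) ⬝ᵥ g t) ^ 2)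
    (L : ℕ → Fin m → ℝ)
    (hL : ∀ t j, L t j = ∑ s ∈ Finset.Icc 1 t, ℓ s (η j) (ws s j))
    -- the master: tilted exponentially weighted average of the slaves
    (hw : ∀ t, 1 ≤ t → t ≤ T →
      w t = (∑ j, π j * Real.exp (-(L (t - 1) j)) * η j)⁻¹ •
        ∑ j, (π j * Real.exp (-(L (t - 1) j)) * η j) • ws t j)
    -- the slaves: covariance matrices, unprojected updates, and projections onto U
    (S : ℕ → Fin m → Matrix (Fin d) (Fin d) ℝ)
    (hS : ∀ t, 1 ≤ t → ∀ j, S (t + 1) j =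
      ((D ^ 2)⁻¹ • (1 : Matrix (Fin d) (Fin d) ℝ) +
        (2 * (η j) ^ 2) • ∑ s ∈ Finset.Icc 1 t, M s)⁻¹)
    (wtil : ℕ → Fin m → Fin d → ℝ) (hws1 : ∀ j, ws 1 j = 0)
    (hwtil : ∀ t, 1 ≤ t → t ≤ T → ∀ j, wtil (t + 1) j =
      ws t j - (S (t + 1) j).mulVec
        ((η j) • g t + (2 * (η j) ^ 2) • (M t).mulVec (ws t j - w t)))
    (hproj : ∀ t, 1 ≤ t → t ≤ T → ∀ j, ws (t + 1) j ∈ U ∧ ∀ u ∈ U,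
      (ws (t + 1) j - wtil (t + 1) j) ⬝ᵥ
          (S (t + 1) j)⁻¹.mulVec (ws (t + 1) j - wtil (t + 1) j) ≤
        (u - wtil (t + 1) j) ⬝ᵥ (S (t + 1) j)⁻¹.mulVec (u - wtil (t + 1) j)) :
    -- conclusion: grid point regret bound
    ∀ j, ∀ u ∈ U,
      ∑ t ∈ Finset.Icc 1 T, (w t - u) ⬝ᵥ g t ≤
        η j * (∑ t ∈ Finset.Icc 1 T, ((u - w t) ⬝ᵥ g t) ^ 2) +
          ((∑ i, (u i) ^ 2) / (2 * D ^ 2) - Real.log (π j) +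
            (1 / 2) * Real.log
              (Matrix.det (1 + (2 * (η j) ^ 2 * D ^ 2) • ∑ t ∈ Finset.Icc 1 T, M t))) /
            η j :=
  stmt_9_general D G hD hG U hUconv hU0 hdiam η hη π hπ hπsum g hg M hM w ws ℓ hℓ L hL hw S hS wtil
    hws1 hwtil hproj
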